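/- arXiv:2010.07412 — 7 statements merged into one kernel-verified Lean document; each statement's English description precedes it below -/
import Mathlib

section
/- Let S be a positive definite even lattice with no roots, d ≥ 2 an integer, and ħ ∈ S a vector with ħ² = 2d(d−1). Suppose l₁, l₂ ∈ S are distinct vectors with l₁² = l₂² = 4 and l₁·ħ = l₂·ħ = 2(d−1). Then l₁·l₂ ≥ −4/d; in particular, if d ≥ 5 then l₁·l₂ ≥ 0. -/
/-- In a root-free positive definite even lattice with `hbar² = 2d(d-1)`,
`d ≥ 2`, two distinct square-4 vectors `l₁, l₂` with `lᵢ·hbar = 2(d-1)` satisfy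
`l₁·l₂ ≥ -4/d`; in particular `l₁·l₂ ≥ 0` if `d ≥ 5`. -/
theorem stmt_2 {S : Type*} [AddCommGroup S] [Module ℤ S] [Module.Free ℤ S]
    [Module.Finite ℤ S]
    (B : S →ₗ[ℤ] S →ₗ[ℤ] ℤ)
    (hsymm : ∀ x y, B x y = B y x)
    (heven : ∀ x, Even (B x x))
    (hpos : ∀ x, x ≠ 0 → 0 < B x x)
    (hroot : ∀ r : S, B r r ≠ 2)
    (d : ℤ) (hd : 2 ≤ d)
    (hbar : S) (hh : B hbar hbar = 2 * d * (d - 1))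
    (l₁ l₂ : S) (h1 : B l₁ l₁ = 4) (h2 : B l₂ l₂ = 4) (hne : l₁ ≠ l₂)
    (hl1 : B l₁ hbar = 2 * (d - 1)) (hl2 : B l₂ hbar = 2 * (d - 1)) :
    (-4 : ℚ) / (d : ℚ) ≤ ((B l₁ l₂ : ℤ) : ℚ) ∧ (5 ≤ d → 0 ≤ B l₁ l₂) := by
  set w : S := d • (l₁ + l₂) - (2 : ℤ) • hbar with hw
  have hwnn : 0 ≤ B w w := by
    rcases eq_or_ne w 0 with h | h
    · simp [h]
    · exact (hpos w h).le
  have hexp : B w w = 2 * d ^ 2 * B l₁ l₂ + 8 * d := by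
    have h21 : B l₂ l₁ = B l₁ l₂ := hsymm l₂ l₁
    have hb1 : B hbar l₁ = 2 * (d - 1) := (hsymm hbar l₁).trans hl1
    have hb2 : B hbar l₂ = 2 * (d - 1) := (hsymm hbar l₂).trans hl2
    simp [hw, map_sub, map_add, map_smul, LinearMap.map_smul₂, sub_smul, add_smul,
      h1, h2, h21, hb1, hb2, hl1, hl2, hh, smul_eq_mul]
    ring
  have key : 0 ≤ 2 * d ^ 2 * B l₁ l₂ + 8 * d := hexp ▸ hwnn
  constructor
  · have hdq : (0 : ℚ) < (d : ℚ) := by exact_mod_cast lt_of_lt_of_le (by norm_num) hd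
    rw [div_le_iff₀ hdq]
    have : (0 : ℚ) ≤ 2 * (d : ℚ) ^ 2 * ((B l₁ l₂ : ℤ) : ℚ) + 8 * d := by exact_mod_cast key
    nlinarith
  · intro h5
    nlinarith [key]
end

section
/- Let d = 3, let S be a positive definite even lattice with no roots, and let ħ ∈ S satisfy ħ² = 12. If l₁ ≠ l₂ ∈ S satisfy l₁² = l₂² = 4 and l₁·ħ = l₂·ħ = 4, then l₁·l₂ = −1 is impossible; that is, l₁·l₂ ∈ {0, 1, 2}. -/
/-- d = 3: In a root-free positive definite even lattice with `hbar² = 12`,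
two distinct square-4 vectors with `lᵢ·hbar = 4` have `l₁·l₂ ∈ {0, 1, 2}`. -/
theorem stmt_3 {S : Type*} [AddCommGroup S] [Module ℤ S] [Module.Free ℤ S]
    [Module.Finite ℤ S]
    (B : S →ₗ[ℤ] S →ₗ[ℤ] ℤ)
    (hsymm : ∀ x y, B x y = B y x)
    (heven : ∀ x, Even (B x x))
    (hpos : ∀ x, x ≠ 0 → 0 < B x x)
    (hroot : ∀ r : S, B r r ≠ 2)
    (hbar : S) (hh : B hbar hbar = 12)
    (l₁ l₂ : S) (h1 : B l₁ l₁ = 4) (h2 : B l₂ l₂ = 4) (hne : l₁ ≠ l₂)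
    (hl1 : B l₁ hbar = 4) (hl2 : B l₂ hbar = 4) :
    B l₁ l₂ ≠ -1 ∧ B l₁ l₂ ∈ ({0, 1, 2} : Set ℤ) := by
  set c := B l₁ l₂ with hc
  have hs : B l₂ l₁ = c := hsymm l₂ l₁
  have hb1 : B hbar l₁ = 4 := (hsymm hbar l₁).trans hl1
  have hb2 : B hbar l₂ = 4 := (hsymm hbar l₂).trans hl2
  -- square of l₁ - l₂
  have hd : B (l₁ - l₂) (l₁ - l₂) = 8 - 2 * c := by
    simp only [map_sub, LinearMap.sub_apply, h1, h2, hs, ← hc]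
    ring
  have hdne : l₁ - l₂ ≠ 0 := sub_ne_zero.mpr hne
  have hdpos : 0 < 8 - 2 * c := hd ▸ hpos _ hdne
  have hdroot : (8 : ℤ) - 2 * c ≠ 2 := hd ▸ hroot (l₁ - l₂)
  have hle : c ≤ 2 := by omega
  -- square of hbar - l₁ - l₂
  have hv : B (hbar - l₁ - l₂) (hbar - l₁ - l₂) = 4 + 2 * c := by
    simp only [map_sub, LinearMap.sub_apply, hh, h1, h2, hs, hl1, hl2, hb1, hb2, ← hc]
    ring
  have hvroot : (4 : ℤ) + 2 * c ≠ 2 := hv ▸ hroot (hbar - l₁ - l₂)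
  have hcne : c ≠ -1 := by omega
  have hge : 0 ≤ c := by
    by_cases hz : hbar - l₁ - l₂ = 0
    · -- then hbar = l₁ + l₂, so 4 = B l₁ hbar = 4 + c
      have heq : hbar = l₁ + l₂ := sub_eq_zero.mp (by rwa [sub_sub] at hz)
      have h4 : B l₁ hbar = 4 + c := by
        rw [heq]; simp only [map_add, h1, ← hc]
      omega
    · have := hv ▸ hpos _ hz
      omega
  refine ⟨hcne, ?_⟩
  simp only [Set.mem_insert_iff, Set.mem_singleton_iff]
  omega
end

section
/- Let d = 4, let S be a positive definite even lattice with no roots, and let ħ ∈ S be a primitive vector with ħ² = 24. If l₁ ≠ l₂ ∈ S satisfy l₁² = l₂² = 4 and l₁·ħ = l₂·ħ = 6, then l₁·l₂ ≠ −1. -/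
/-- d = 4: In a root-free positive definite even lattice with a primitive
vector `hbar` of square 24, two distinct square-4 vectors with `lᵢ·hbar = 6` satisfy
`l₁·l₂ ≠ -1`. -/
theorem stmt_4 {S : Type*} [AddCommGroup S] [Module ℤ S] [Module.Free ℤ S]
    [Module.Finite ℤ S]
    (B : S →ₗ[ℤ] S →ₗ[ℤ] ℤ)
    (hsymm : ∀ x y, B x y = B y x)
    (heven : ∀ x, Even (B x x))
    (hpos : ∀ x, x ≠ 0 → 0 < B x x)
    (hroot : ∀ r : S, B r r ≠ 2)
    (hbar : S) (hh : B hbar hbar = 24)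
    (hprim : ∀ (n : ℤ) (w : S), hbar = n • w → n = 1 ∨ n = -1)
    (l₁ l₂ : S) (h1 : B l₁ l₁ = 4) (h2 : B l₂ l₂ = 4) (hne : l₁ ≠ l₂)
    (hl1 : B l₁ hbar = 6) (hl2 : B l₂ hbar = 6) :
    B l₁ l₂ ≠ -1 := by
  intro h12
  have e1 := hsymm hbar l₁
  have e2 := hsymm hbar l₂
  have e3 := hsymm l₂ l₁
  have hvv : B (hbar - (l₁ + l₂) - (l₁ + l₂)) (hbar - (l₁ + l₂) - (l₁ + l₂)) = 0 := by
    simp only [map_sub, map_add, LinearMap.sub_apply, LinearMap.add_apply]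
    linarith
  have hv0 : hbar - (l₁ + l₂) - (l₁ + l₂) = 0 := by
    by_contra hne0
    have := hpos _ hne0
    omega
  have heq : hbar = (2:ℤ) • (l₁ + l₂) := by
    rw [sub_sub, sub_eq_zero] at hv0
    rw [hv0]
    exact (two_zsmul _).symm
  rcases hprim 2 (l₁ + l₂) heq with h | h <;> omega
end

section
/- Let S be a finite set with |S| = n, and let 𝔖 be a collection of m-element subsets of S such that for any two r, s ∈ 𝔖, the symmetric difference r △ s has cardinality in {0, 4, 6, 8}. Then |𝔖| ≤ ⌊(1/m)·C(n, m−1)⌋, where C(n, m−1) is the binomial coefficient. -/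
open Finset in
/-- A family of `m`-element subsets of an `n`-element set whose pairwise
symmetric differences have cardinality in {0, 4, 6, 8} has at most `⌊C(n, m-1)/m⌋`
members. -/
theorem stmt_7 {α : Type*} [DecidableEq α] (n m : ℕ) (hm : 1 ≤ m)
    (S : Finset α) (hS : S.card = n)
    (𝔖 : Finset (Finset α))
    (hsub : ∀ s ∈ 𝔖, s ⊆ S)
    (hcard : ∀ s ∈ 𝔖, s.card = m)
    (hdiff : ∀ r ∈ 𝔖, ∀ s ∈ 𝔖, (symmDiff r s).card ∈ ({0, 4, 6, 8} : Set ℕ)) :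
    𝔖.card ≤ n.choose (m - 1) / m := by
  have hm0 : 0 < m := hm
  rw [Nat.le_div_iff_mul_le hm0]
  have hdisj : ∀ r ∈ 𝔖, ∀ s ∈ 𝔖, r ≠ s →
      Disjoint (r.powersetCard (m-1)) (s.powersetCard (m-1)) := by
    intro r hr s hs hne
    rw [Finset.disjoint_left]
    intro t htr hts
    rw [Finset.mem_powersetCard] at htr hts
    have hti : t ⊆ r ∩ s := Finset.subset_inter htr.1 hts.1
    have hci : m - 1 ≤ (r ∩ s).card := htr.2 ▸ Finset.card_le_card hti
    have h1 : (r \ s).card + (r ∩ s).card = r.card := Finset.card_sdiff_add_card_inter r s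
    have h2 : (s \ r).card + (s ∩ r).card = s.card := Finset.card_sdiff_add_card_inter s r
    rw [Finset.inter_comm] at h2
    have hsd : (symmDiff r s).card = (r \ s).card + (s \ r).card := by
      rw [symmDiff_def, sup_eq_union, Finset.card_union_of_disjoint disjoint_sdiff_sdiff]
    have := hdiff r hr s hs
    have hrs : r.card = m := hcard r hr
    have hss : s.card = m := hcard s hs
    simp only [Set.mem_insert_iff, Set.mem_singleton_iff] at this
    have hzero : (symmDiff r s).card = 0 := by omega
    have : symmDiff r s = ⊥ := Finset.card_eq_zero.mp hzero
    exact hne (symmDiff_eq_bot.mp this)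
  have hsum : ∑ s ∈ 𝔖, (s.powersetCard (m-1)).card = 𝔖.card * m := by
    rw [Finset.sum_congr rfl (fun s hs => ?_), Finset.sum_const, smul_eq_mul]
    rw [Finset.card_powersetCard, hcard s hs]
    rw [← Nat.choose_symm (Nat.sub_le m 1), Nat.sub_sub_self hm, Nat.choose_one_right]
  calc 𝔖.card * m = (𝔖.biUnion (fun s => s.powersetCard (m-1))).card := by
        rw [Finset.card_biUnion hdisj, hsum]
    _ ≤ (S.powersetCard (m-1)).card := by
        apply Finset.card_le_card
        intro t ht
        rw [Finset.mem_biUnion] at ht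
        obtain ⟨s, hs, hts⟩ := ht
        rw [Finset.mem_powersetCard] at hts ⊢
        exact ⟨hts.1.trans (hsub s hs), hts.2⟩
    _ = n.choose (m-1) := by rw [Finset.card_powersetCard, hS]
end

section
/- If a, b are elements of a root-free (no vectors of square 2) positive definite even lattice Λ with a² = 4 and a + 2b of square 12, then there exists k ∈ ℤ such that b' = b + ka satisfies b'² = 4 and a·b' = −2. -/
/-- If `a, b` are elements of a root-free positive definite even lattice
with `a² = 4` and `(a + 2b)² = 12`, then there is `k : ℤ` such that `b' = b + k•a`
satisfies `b'² = 4` and `a·b' = -2`. -/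
theorem stmt_13 {L : Type*} [AddCommGroup L] [Module ℤ L] [Module.Free ℤ L]
    [Module.Finite ℤ L]
    (B : L →ₗ[ℤ] L →ₗ[ℤ] ℤ)
    (hsymm : ∀ x y, B x y = B y x)
    (heven : ∀ x, Even (B x x))
    (hpos : ∀ x, x ≠ 0 → 0 < B x x)
    (hroot : ∀ r : L, B r r ≠ 2)
    (a b : L) (ha : B a a = 4)
    (hab : B (a + 2 • b) (a + 2 • b) = 12) :
    ∃ k : ℤ, B (b + k • a) (b + k • a) = 4 ∧ B a (b + k • a) = -2 := by
  set s := B a b with hs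
  set t := B b b with ht
  have hba : B b a = s := (hsymm b a)
  have hkey : s + t = 2 := by
    have h := hab
    simp only [two_smul, map_add, LinearMap.add_apply, hba, ← hs, ← ht, ha] at h
    linarith
  -- b ≠ 0
  have hb0 : b ≠ 0 := by
    rintro rfl
    simp only [map_zero, LinearMap.zero_apply] at hs ht
    omega
  have htpos : 0 < t := hpos b hb0
  have ht2 : t ≠ 2 := hroot b
  obtain ⟨m, hm⟩ := heven b
  have ht4 : 4 ≤ t := by omega
  -- Cauchy-Schwarz: s^2 ≤ 4 * t
  have hcs : s ^ 2 ≤ 4 * t := by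
    have hv : B (t • a - s • b) (t • a - s • b) = t * (4 * t - s ^ 2) := by
      simp only [map_sub, map_zsmul, LinearMap.sub_apply,
        LinearMap.smul_apply, smul_eq_mul, hba, ← hs, ← ht, ha]
      ring
    rcases eq_or_ne (t • a - s • b) 0 with h0 | h0
    · rw [h0] at hv
      simp only [map_zero, LinearMap.zero_apply] at hv
      nlinarith
    · have := hpos _ h0
      rw [hv] at this
      nlinarith
  have hs6 : -6 < s := by nlinarith
  -- so s = -2 or s = -4
  have hcase : s = -2 ∨ s = -4 := by omega
  rcases hcase with h2 | h4
  · refine ⟨0, ?_, ?_⟩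
    · simp only [zero_smul, add_zero, ← ht]; omega
    · simp only [zero_smul, add_zero, ← hs]; omega
  · exfalso
    apply hroot (a + b)
    simp only [map_add, LinearMap.add_apply, hba, ← hs, ← ht, ha]
    omega
end

section
/- In the extended binary Golay code C₂₄ ⊆ F₂²⁴, regarded as a collection of subsets of a 24-element set Ω closed under symmetric difference, the weight enumerator is: one word of weight 0, 759 of weight 8 (octads), 2576 of weight 12 (dodecads), 759 of weight 16, and one of weight 24; in particular, C₂₄ is invariant under complementation (S ∈ C₂₄ implies Ω \ S ∈ C₂₄) and contains no words of weight 4. -/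
/-!
All weights are even, so the all-ones word is orthogonal to `C`, hence lies in `C`. Adding it
maps weight `w` to `24 - w`: so `A₁₆ = A₈`, `A₂₄ = A₀ = 1`, and weight `20` is excluded along
with `4`, leaving the weights `0, 8, 12, 16, 24`.

Two linear equations then determine `A₈` and `A₁₂`: `∑ A_w = 4096` and the second moment
`∑ w² A_w = 24 · 25 · 4096 / 4`. For the latter, count pairs of coordinates: since `C` is its own
dual and has no nonzero word of weight `≤ 2`, for every `i` (resp. `i ≠ j`) some codeword has
`d i = 1` (resp. `d i ≠ d j`); translating by it shows that exactly half of the codewords have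
`x i = 1` and exactly a quarter have `x i = x j = 1`.
-/

open Finset in
/-- The (Hamming) weight of a binary word of length 24. -/
def golayWt (x : Fin 24 → ZMod 2) : ℕ := (Finset.univ.filter fun i => x i ≠ 0).card

open Finset

theorem ZMod.two_add_ne_zero_iff {b c : ZMod 2} (hc : c ≠ 0) : b + c ≠ 0 ↔ ¬b ≠ 0 := by
  revert b c; decide

theorem Nat.card_subtype_mem_and {α S : Type*} [SetLike S α] {s : S} [Fintype s]
    (p : α → Prop) [DecidablePred p] : Nat.card {x // x ∈ s ∧ p x} = #{x : s | p x} := by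
  rw [← Fintype.card_subtype, ← Nat.card_eq_fintype_card]
  exact Nat.card_congr (Equiv.subtypeSubtypeEquivSubtypeInter (· ∈ s) p).symm

theorem sum_comp_eq_sum_card_fiber_smul {α κ M : Type*} [Fintype α] [DecidableEq κ]
    [AddCommMonoid M] {g : α → κ} {t : Finset κ} (hg : ∀ a, g a ∈ t) (f : κ → M) :
    ∑ a, f (g a) = ∑ k ∈ t, #{a | g a = k} • f k := by
  rw [← sum_fiberwise_of_maps_to' (fun a _ => hg a)]
  simp only [sum_const]

section Translation

variable {G : Type*} [AddGroup G] [Fintype G]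

theorem card_filter_comp_add_right (P : G → Prop) [DecidablePred P] (a : G) :
    #{x | P (x + a)} = #{x | P x} :=
  card_equiv (Equiv.addRight a) (by simp)

theorem two_mul_card_filter_and_of_add_right {P Q : G → Prop} [DecidablePred P]
    [DecidablePred Q] {a : G} (hQ : ∀ x, Q (x + a) ↔ Q x) (hP : ∀ x, P (x + a) ↔ ¬P x) :
    2 * #{x | Q x ∧ P x} = #{x | Q x} := by
  have hflip : #{x | Q x ∧ ¬P x} = #{x | Q x ∧ P x} := by
    simpa only [hQ, hP, not_not] using
      (card_filter_comp_add_right (fun x => Q x ∧ ¬P x) a).symm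
  rw [two_mul, ← card_filter_add_card_filter_not (s := {x | Q x}) P, filter_filter,
    filter_filter, hflip]

theorem two_mul_card_filter_of_add_right {P : G → Prop} [DecidablePred P] {a : G}
    (hP : ∀ x, P (x + a) ↔ ¬P x) : 2 * #{x | P x} = Fintype.card G := by
  simpa using two_mul_card_filter_and_of_add_right (Q := fun _ => True) (by simp) hP

end Translation

section Hamming

variable {ι : Type*} [Fintype ι] {β : Type*} [Zero β] [DecidableEq β]

theorem hammingNorm_le_card {v : ι → β} (s : Finset ι) (hv : ∀ i ∉ s, v i = 0) :
    hammingNorm v ≤ #s :=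
  card_le_card fun i hi => by_contra fun his => (mem_filter.1 hi).2 (hv i his)

theorem sum_hammingNorm_sq {α : Type*} (s : Finset α) (f : α → ι → β) :
    ∑ a ∈ s, hammingNorm (f a) ^ 2 = ∑ i, ∑ j, #{a ∈ s | f a i ≠ 0 ∧ f a j ≠ 0} := by
  simp only [hammingNorm, card_filter, sq, sum_mul_sum, ite_zero_mul_ite_zero, mul_one]
  rw [sum_comm]
  exact sum_congr rfl fun i _ => sum_comm

end Hamming

section BinaryCode

variable {ι : Type*} {C : Submodule (ZMod 2) (ι → ZMod 2)}

theorem sum_eq_hammingNorm [Fintype ι] (y : ι → ZMod 2) : ∑ i, y i = hammingNorm y := by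
  have hbit : ∀ a : ZMod 2, a = ((if a ≠ 0 then 1 else 0 : ℕ) : ZMod 2) := by decide
  rw [hammingNorm, card_filter, Nat.cast_sum]
  exact sum_congr rfl fun i _ => hbit (y i)

theorem hammingNorm_add_one [Fintype ι] (x : ι → ZMod 2) :
    hammingNorm (x + 1) = Fintype.card ι - hammingNorm x := by
  have hsplit := card_filter_add_card_filter_not (s := univ) (fun i => x i ≠ 0)
  simp only [hammingNorm, Pi.add_apply, Pi.one_apply, ZMod.two_add_ne_zero_iff one_ne_zero]
  rw [card_univ] at hsplit
  omega

theorem one_mem_of_forall_even [Fintype ι] (hdual : ∀ v, (∀ y ∈ C, v ⬝ᵥ y = 0) → v ∈ C)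
    (heven : ∀ y ∈ C, Even (hammingNorm y)) : (1 : ι → ZMod 2) ∈ C :=
  hdual 1 fun y hy => by
    rw [one_dotProduct, sum_eq_hammingNorm, ZMod.natCast_eq_zero_iff_even]
    exact heven y hy

theorem exists_mem_apply_ne_zero [Fintype ι]
    (hdual : ∀ v, (∀ y ∈ C, v ⬝ᵥ y = 0) → v ≠ 0 → 2 ≤ hammingNorm v) (i : ι) :
    ∃ a ∈ C, a i ≠ 0 := by
  classical
  by_contra! h
  have horth : ∀ y ∈ C, Pi.single i 1 ⬝ᵥ y = 0 := fun y hy => by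
    rw [single_dotProduct, one_mul, h y hy]
  have hwt := hammingNorm_le_card (v := Pi.single i (1 : ZMod 2)) {i} fun k hk =>
    Pi.single_eq_of_ne (by simpa using hk) 1
  have := hdual _ horth (by simp)
  simp only [card_singleton] at hwt
  omega

theorem exists_mem_apply_ne_apply [Fintype ι]
    (hdual : ∀ v, (∀ y ∈ C, v ⬝ᵥ y = 0) → v ≠ 0 → 3 ≤ hammingNorm v) {i j : ι}
    (hij : i ≠ j) : ∃ d ∈ C, d i ≠ d j := by
  classical
  by_contra! h
  set v : ι → ZMod 2 := Pi.single i 1 + Pi.single j 1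
  have horth : ∀ y ∈ C, v ⬝ᵥ y = 0 := fun y hy => by
    rw [add_dotProduct, single_dotProduct, single_dotProduct, one_mul, one_mul, h y hy,
      CharTwo.add_self_eq_zero]
  have hv : v ≠ 0 := fun h0 => by simpa [v, hij] using congr_fun h0 i
  have hwt := hammingNorm_le_card (v := v) {i, j} fun k hk => by
    simp only [mem_insert, mem_singleton, not_or] at hk
    simp [v, hk.1, hk.2]
  have := hdual v horth hv
  have := card_le_two (a := i) (b := j)
  omega

variable [Fintype C]

theorem two_mul_card_apply_ne_zero {a : ι → ZMod 2} (ha : a ∈ C) {i : ι} (hai : a i ≠ 0) :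
    2 * #{x : C | (x : ι → ZMod 2) i ≠ 0} = Fintype.card C :=
  two_mul_card_filter_of_add_right (a := ⟨a, ha⟩) fun _ => ZMod.two_add_ne_zero_iff hai

theorem four_mul_card_apply_ne_zero_and [Fintype ι]
    (hdual : ∀ v, (∀ y ∈ C, v ⬝ᵥ y = 0) → v ≠ 0 → 3 ≤ hammingNorm v) {i j : ι}
    (hij : i ≠ j) :
    4 * #{x : C | (x : ι → ZMod 2) i ≠ 0 ∧ (x : ι → ZMod 2) j ≠ 0} = Fintype.card C := by
  obtain ⟨d, hd, hdij⟩ := exists_mem_apply_ne_apply hdual hij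
  wlog hdi : d i = 0 generalizing i j
  · have hbits : ∀ b c : ZMod 2, b ≠ c → b ≠ 0 → c = 0 := by decide
    simpa only [and_comm] using this hij.symm hdij.symm (hbits _ _ hdij hdi)
  obtain ⟨a, ha, hai⟩ :=
    exists_mem_apply_ne_zero (fun v hv hv0 => (hdual v hv hv0).trans' (by norm_num)) i
  have hhalf := two_mul_card_filter_and_of_add_right (G := C) (a := ⟨d, hd⟩)
    (Q := fun x => (x : ι → ZMod 2) i ≠ 0) (P := fun x => (x : ι → ZMod 2) j ≠ 0)
    (fun x => by simp [hdi]) fun _ => ZMod.two_add_ne_zero_iff (hdi ▸ hdij.symm)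
  rw [← two_mul_card_apply_ne_zero ha hai, ← hhalf]
  ring

theorem four_mul_sum_hammingNorm_sq [Fintype ι]
    (hdual : ∀ v, (∀ y ∈ C, v ⬝ᵥ y = 0) → v ≠ 0 → 3 ≤ hammingNorm v) :
    4 * ∑ x : C, hammingNorm (x : ι → ZMod 2) ^ 2
      = Fintype.card ι * (Fintype.card ι + 1) * Fintype.card C := by
  classical
  have hpair : ∀ i j : ι, 4 * #{x : C | (x : ι → ZMod 2) i ≠ 0 ∧ (x : ι → ZMod 2) j ≠ 0}
      = Fintype.card C + if i = j then Fintype.card C else 0 := by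
    intro i j
    split_ifs with hij
    · obtain ⟨a, ha, hai⟩ := exists_mem_apply_ne_zero
        (fun v hv hv0 => (hdual v hv hv0).trans' (by norm_num)) i
      simp only [← hij, and_self]
      rw [← two_mul_card_apply_ne_zero ha hai]
      ring
    · rw [four_mul_card_apply_ne_zero_and hdual hij, add_zero]
  simp only [sum_hammingNorm_sq, mul_sum, hpair, sum_add_distrib, sum_const, sum_ite_eq,
    card_univ, mem_univ, if_true, smul_eq_mul]
  ring

theorem card_filter_hammingNorm_eq_of_add_eq [Fintype ι] (hone : (1 : ι → ZMod 2) ∈ C)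
    {v w : ℕ} (hvw : v + w = Fintype.card ι) :
    #{x : C | hammingNorm (x : ι → ZMod 2) = v}
      = #{x : C | hammingNorm (x : ι → ZMod 2) = w} := by
  rw [← card_filter_comp_add_right _ (⟨1, hone⟩ : C)]
  refine congrArg card (filter_congr fun x _ => ?_)
  have hle : hammingNorm (x : ι → ZMod 2) ≤ Fintype.card ι := hammingNorm_le_card_fintype
  rw [Submodule.coe_add, hammingNorm_add_one]
  omega

end BinaryCode

theorem hammingNorm_mem_of_doublyEven {C : Submodule (ZMod 2) (Fin 24 → ZMod 2)}
    (hone : (1 : Fin 24 → ZMod 2) ∈ C) (hdoublyeven : ∀ x ∈ C, 4 ∣ hammingNorm x)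
    (hmin : ∀ x ∈ C, x ≠ 0 → 8 ≤ hammingNorm x) {x : Fin 24 → ZMod 2} (hx : x ∈ C) :
    hammingNorm x ∈ ({0, 8, 12, 16, 24} : Finset ℕ) := by
  rcases eq_or_ne x 0 with rfl | hx0
  · simp
  have hle : hammingNorm x ≤ 24 := hammingNorm_le_card_fintype.trans (Fintype.card_fin 24).le
  have h8 := hmin x hx hx0
  have hcompl : hammingNorm (x + 1) = 24 - hammingNorm x := by
    rw [hammingNorm_add_one, Fintype.card_fin]
  have hcompl8 : x + 1 = 0 ∨ 8 ≤ hammingNorm (x + 1) :=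
    (eq_or_ne _ _).imp_right (hmin _ (C.add_mem hx hone))
  rw [← hammingNorm_eq_zero] at hcompl8
  obtain ⟨k, hk⟩ := hdoublyeven x hx
  simp only [mem_insert, mem_singleton]
  omega

theorem golayWt_eq_hammingNorm : golayWt = hammingNorm := rfl

/-- The extended binary Golay code — characterized as a self-dual, doubly
even binary linear code of length 24, dimension 12 (i.e. 4096 words) and minimum
distance 8 — has weight enumerator `0¹ 8⁷⁵⁹ 12²⁵⁷⁶ 16⁷⁵⁹ 24¹`; in particular it is
invariant under complementation and contains no words of weight 4. -/
theorem stmt_17 (C : Submodule (ZMod 2) (Fin 24 → ZMod 2))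
    (hcard : Nat.card C = 4096)
    (hselfdual : ∀ x : Fin 24 → ZMod 2,
      x ∈ C ↔ ∀ y ∈ C, ∑ i, x i * y i = 0)
    (hdoublyeven : ∀ x ∈ C, 4 ∣ golayWt x)
    (hmin : ∀ x ∈ C, x ≠ 0 → 8 ≤ golayWt x) :
    Nat.card {x : Fin 24 → ZMod 2 // x ∈ C ∧ golayWt x = 0} = 1 ∧
    Nat.card {x : Fin 24 → ZMod 2 // x ∈ C ∧ golayWt x = 8} = 759 ∧
    Nat.card {x : Fin 24 → ZMod 2 // x ∈ C ∧ golayWt x = 12} = 2576 ∧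
    Nat.card {x : Fin 24 → ZMod 2 // x ∈ C ∧ golayWt x = 16} = 759 ∧
    Nat.card {x : Fin 24 → ZMod 2 // x ∈ C ∧ golayWt x = 24} = 1 ∧
    (∀ x ∈ C, (fun i => x i + 1) ∈ C) ∧
    (∀ x ∈ C, golayWt x ≠ 4) := by
  classical
  have : Fintype C := Fintype.ofFinite C
  simp only [golayWt_eq_hammingNorm, Nat.card_subtype_mem_and] at *
  rw [Nat.card_eq_fintype_card] at hcard
  have hone : (1 : Fin 24 → ZMod 2) ∈ C :=
    one_mem_of_forall_even (fun v hv => (hselfdual v).2 hv) fun y hy =>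
      even_iff_two_dvd.2 (dvd_trans (by norm_num) (hdoublyeven y hy))
  have hweights : ∀ x : C, hammingNorm (x : Fin 24 → ZMod 2) ∈ ({0, 8, 12, 16, 24} : Finset ℕ) :=
    fun x => hammingNorm_mem_of_doublyEven hone hdoublyeven hmin x.2
  have hno4 : ∀ x ∈ C, hammingNorm x ≠ 4 := fun x hx h4 => by
    simpa [h4] using hammingNorm_mem_of_doublyEven hone hdoublyeven hmin hx
  have h0 : #{x : C | hammingNorm (x : Fin 24 → ZMod 2) = 0} = 1 := by simp [filter_eq']
  have h24 := card_filter_hammingNorm_eq_of_add_eq hone (v := 24) (w := 0) rfl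
  have h16 := card_filter_hammingNorm_eq_of_add_eq hone (v := 16) (w := 8) rfl
  have htotal := card_eq_sum_card_fiberwise (s := univ) (fun x _ => hweights x)
  have hmoment := four_mul_sum_hammingNorm_sq (C := C) fun v hv hv0 =>
    (hmin v ((hselfdual v).2 hv) hv0).trans' (by norm_num)
  rw [sum_comp_eq_sum_card_fiber_smul hweights (· ^ 2)] at hmoment
  have hW : ∀ f : ℕ → ℕ, ∑ w ∈ ({0, 8, 12, 16, 24} : Finset ℕ), f w
      = f 0 + f 8 + f 12 + f 16 + f 24 := fun f => by simp [add_assoc]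
  simp only [hW, card_univ, smul_eq_mul, Fintype.card_fin] at htotal hmoment
  refine ⟨h0, ?_, ?_, ?_, h24.trans h0, fun x hx => C.add_mem hx hone, hno4⟩ <;> omega
end

section
/- Let N be an even unimodular lattice and ħ ∈ N primitive. Let F ⊆ N be a sublattice of index 4 with ħ ∈ F, ħ ∈ 4F*, and discr F ≅ ℤ/4 ⊕ ℤ/4 generated by α := a mod F (a ∈ N, a·ħ = 1) and η := (1/4)ħ mod F. Let N′ ⊇ F be the even unimodular extension defined by the isotropic subgroup ⟨α + 2η⟩. Then the set {l ∈ N : l² = 4, l·ħ = 4} equals the set {l ∈ N′ : l² = 4, l·ħ = 4}; that is, replanting preserves the set of 'conics'. -/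
/-!
Let `ℓ = B hbar ·`, an additive functional with `ℓ F ⊆ 4ℤ` and `ℓ a = 1`. Then `d • a ∈ F`
forces `4 ∣ d`, so the class of `a` has order `4` in `N / F`, a group of order `4`; hence
`N = F + ℤa` and `4a ∈ F`. The vector `b = a + hbar / 2` generating `N′` over `F` has odd
`ℓ b = 1 + 2 (hbar² / 4)` and `4b = 4a + 2hbar ∈ F`. In both lattices, a vector `f + t c`
(`c = a` or `b`) with `ℓ = 4` therefore has `4 ∣ t`, so it already lies in `F`: both conic sets
equal `{l ∈ F : l² = 4, l·hbar = 4}`.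
-/

section IndexQuotient

variable {V : Type*} [AddCommGroup V] (ℓ : V →+ ℚ) {F N : Submodule ℤ V} {n : ℕ} {a : V}

theorem natCast_dvd_of_zsmul_mem (hF : ∀ x ∈ F, ∃ k : ℤ, ℓ x = n * k) (hℓa : ℓ a = 1)
    {d : ℤ} (hd : d • a ∈ F) : (n : ℤ) ∣ d := by
  obtain ⟨k, hk⟩ := hF _ hd
  rw [map_zsmul, hℓa, zsmul_one] at hk
  exact ⟨k, by exact_mod_cast hk⟩

theorem addOrderOf_mk_eq_of_card_quotient (hcard : Nat.card (N ⧸ F.comap N.subtype) = n)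
    (hF : ∀ x ∈ F, ∃ k : ℤ, ℓ x = n * k) (ha : a ∈ N) (hℓa : ℓ a = 1) :
    addOrderOf (Submodule.Quotient.mk (⟨a, ha⟩ : N) : N ⧸ F.comap N.subtype) = n := by
  set q : N ⧸ F.comap N.subtype := Submodule.Quotient.mk ⟨a, ha⟩
  refine Nat.dvd_antisymm (hcard ▸ addOrderOf_dvd_natCard q) ?_
  have hzero : (Submodule.Quotient.mk ((addOrderOf q : ℤ) • (⟨a, ha⟩ : N)) :
      N ⧸ F.comap N.subtype) = 0 := by
    rw [Submodule.Quotient.mk_smul, natCast_zsmul, addOrderOf_nsmul_eq_zero]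
  exact Int.natCast_dvd_natCast.mp <| natCast_dvd_of_zsmul_mem ℓ hF hℓa <|
    (Submodule.Quotient.mk_eq_zero (F.comap N.subtype)).mp hzero

theorem natCast_zsmul_mem_of_card_quotient (hcard : Nat.card (N ⧸ F.comap N.subtype) = n)
    (hF : ∀ x ∈ F, ∃ k : ℤ, ℓ x = n * k) (ha : a ∈ N) (hℓa : ℓ a = 1) : (n : ℤ) • a ∈ F := by
  have hzero : Submodule.Quotient.mk ((n : ℤ) • (⟨a, ha⟩ : N)) =
      (0 : N ⧸ F.comap N.subtype) := by
    rw [Submodule.Quotient.mk_smul, natCast_zsmul,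
      ← addOrderOf_mk_eq_of_card_quotient ℓ hcard hF ha hℓa, addOrderOf_nsmul_eq_zero]
  exact (Submodule.Quotient.mk_eq_zero (F.comap N.subtype)).mp hzero

theorem le_sup_span_singleton_of_card_quotient (hcard : Nat.card (N ⧸ F.comap N.subtype) = n)
    (hn : n ≠ 0) (hF : ∀ x ∈ F, ∃ k : ℤ, ℓ x = n * k) (ha : a ∈ N) (hℓa : ℓ a = 1) :
    N ≤ F ⊔ Submodule.span ℤ {a} := by
  have : Finite (N ⧸ F.comap N.subtype) := Nat.finite_of_card_ne_zero (hcard ▸ hn)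
  have htop : AddSubgroup.zmultiples
      (Submodule.Quotient.mk ⟨a, ha⟩ : N ⧸ F.comap N.subtype) = ⊤ :=
    AddSubgroup.eq_top_of_card_eq _ <| by
      rw [Nat.card_zmultiples, addOrderOf_mk_eq_of_card_quotient ℓ hcard hF ha hℓa, hcard]
  intro l hl
  have hmem : (Submodule.Quotient.mk ⟨l, hl⟩ : N ⧸ F.comap N.subtype) ∈
      AddSubgroup.zmultiples (Submodule.Quotient.mk ⟨a, ha⟩) := htop ▸ AddSubgroup.mem_top _
  obtain ⟨m, hm⟩ := AddSubgroup.mem_zmultiples_iff.mp hmem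
  rw [← Submodule.Quotient.mk_smul, Submodule.Quotient.eq] at hm
  have hsub : m • a - l ∈ F := hm
  rw [show l = -(m • a - l) + m • a by abel]
  exact Submodule.add_mem_sup (F.neg_mem hsub) (Submodule.mem_span_singleton.mpr ⟨m, rfl⟩)

end IndexQuotient

theorem mem_of_mem_sup_span_singleton {V : Type*} [AddCommGroup V] (ℓ : V →+ ℚ)
    {F : Submodule ℤ V} {n : ℕ} (hF : ∀ x ∈ F, ∃ k : ℤ, ℓ x = n * k) {b : V} {u : ℤ}
    (hℓb : ℓ b = u) (hu : IsCoprime (n : ℤ) u) (hnb : (n : ℤ) • b ∈ F)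
    {l : V} (hl : l ∈ F ⊔ Submodule.span ℤ {b}) {k : ℤ} (hℓl : ℓ l = n * k) : l ∈ F := by
  obtain ⟨f, hf, s, hs, rfl⟩ := Submodule.mem_sup.mp hl
  obtain ⟨t, rfl⟩ := Submodule.mem_span_singleton.mp hs
  obtain ⟨k', hk'⟩ := hF f hf
  rw [map_add, map_zsmul, hℓb, hk', zsmul_eq_mul] at hℓl
  have hdvd : (n : ℤ) ∣ u * t := ⟨k - k', by
    have : ((u * t : ℤ) : ℚ) = ((n * (k - k') : ℤ) : ℚ) := by push_cast; linarith
    exact_mod_cast this⟩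
  obtain ⟨s, rfl⟩ := hu.dvd_of_dvd_mul_left hdvd
  rw [mul_comm, mul_zsmul]
  exact add_mem hf (F.smul_mem s hnb)

open LinearMap in
theorem stmt_18_general {V : Type*} [AddCommGroup V] [Module ℚ V]
    (B : LinearMap.BilinForm ℚ V)
    (hsymm : ∀ x y, B x y = B y x)
    (N : Submodule ℤ V)
    (hbar : V)
    (F : Submodule ℤ V) (hFN : F ≤ N) (hbarF : hbar ∈ F)
    (hbar4 : ∀ x ∈ F, ∃ k : ℤ, B hbar x = 4 * (k : ℚ))
    (hindex : Nat.card (↥N ⧸ (F.comap N.subtype)) = 4)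
    (a : V) (haN : a ∈ N) (hahbar : B a hbar = 1) :
    ∀ l : V,
      (l ∈ N ∧ B l l = 4 ∧ B l hbar = 4) ↔
      (l ∈ F ⊔ Submodule.span ℤ {a + (2 : ℚ)⁻¹ • hbar} ∧ B l l = 4 ∧ B l hbar = 4) := by
  set ℓ : V →+ ℚ := (B hbar).toAddMonoidHom
  have hF : ∀ x ∈ F, ∃ k : ℤ, ℓ x = (4 : ℕ) * k := by exact_mod_cast hbar4
  have hBa : B hbar a = 1 := by rw [hsymm, hahbar]
  obtain ⟨m, hm⟩ := hbar4 hbar hbarF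
  have hBb : B hbar (a + (2 : ℚ)⁻¹ • hbar) = ((1 + 2 * m : ℤ) : ℚ) := by
    rw [map_add, map_smul, hBa, hm, smul_eq_mul]; push_cast; ring
  have hcoprime : IsCoprime ((4 : ℕ) : ℤ) (1 + 2 * m) :=
    ⟨-m - m ^ 2, 1 + 2 * m, by push_cast; ring⟩
  have h4a := natCast_zsmul_mem_of_card_quotient ℓ hindex hF haN hBa
  have h4b : ((4 : ℕ) : ℤ) • (a + (2 : ℚ)⁻¹ • hbar) ∈ F := by
    rw [smul_add, show ((4 : ℕ) : ℤ) • (2 : ℚ)⁻¹ • hbar = (2 : ℤ) • hbar by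
      rw [← Int.cast_smul_eq_zsmul ℚ, ← Int.cast_smul_eq_zsmul ℚ, smul_smul]; norm_num]
    exact add_mem h4a (F.smul_mem 2 hbarF)
  have hℓ_eq_four : ∀ l, B l hbar = 4 → ℓ l = (4 : ℕ) * (1 : ℤ) := fun l h => by
    rw [← hsymm] at h; simpa [ℓ] using h
  intro l
  constructor
  · rintro ⟨hlN, hll, hlh⟩
    have hlFa := le_sup_span_singleton_of_card_quotient ℓ hindex four_ne_zero hF haN hBa hlN
    refine ⟨Submodule.mem_sup_left ?_, hll, hlh⟩
    exact mem_of_mem_sup_span_singleton ℓ hF (u := 1) (by exact_mod_cast hBa)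
      isCoprime_one_right h4a hlFa (hℓ_eq_four l hlh)
  · rintro ⟨hlN', hll, hlh⟩
    refine ⟨hFN ?_, hll, hlh⟩
    exact mem_of_mem_sup_span_singleton ℓ hF hBb hcoprime h4b hlN' (hℓ_eq_four l hlh)

open LinearMap in
/-- "replanting preserves conics": Let `N` be an even unimodular
ℤ-lattice with a primitive vector `hbar`, and `F ⊆ N` an index-4 sublattice with
`hbar ∈ F`, `hbar ∈ 4F*`, whose discriminant group is generated by the classes of
`a` (where `a ∈ N`, `a·hbar = 1`) and `(1/4)hbar`.  Let `N′ = F + ℤ(a + (1/2)hbar)` be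
the even unimodular extension of `F` defined by the isotropic subgroup `⟨α + 2η⟩`.
Then `{l ∈ N : l² = 4, l·hbar = 4} = {l ∈ N′ : l² = 4, l·hbar = 4}`. -/
theorem stmt_18 {V : Type*} [AddCommGroup V] [Module ℚ V] [FiniteDimensional ℚ V]
    (B : LinearMap.BilinForm ℚ V)
    (hsymm : ∀ x y, B x y = B y x)
    (N : Submodule ℤ V) (hfg : N.FG)
    (hspan : Submodule.span ℚ (N : Set V) = ⊤)
    (hint : ∀ x ∈ N, ∀ y ∈ N, ∃ k : ℤ, B x y = (k : ℚ))
    (heven : ∀ x ∈ N, ∃ k : ℤ, B x x = 2 * (k : ℚ))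
    (hunimod : B.dualSubmodule N = N)
    (hbar : V) (hbarN : hbar ∈ N)
    (hprim : ∀ (n : ℤ), ∀ w ∈ N, hbar = n • w → IsUnit n)
    (F : Submodule ℤ V) (hFN : F ≤ N) (hbarF : hbar ∈ F)
    (hbar4 : ∀ x ∈ F, ∃ k : ℤ, B hbar x = 4 * (k : ℚ))
    (hindex : Nat.card (↥N ⧸ (F.comap N.subtype)) = 4)
    (a : V) (haN : a ∈ N) (hahbar : B a hbar = 1)
    (hgen : B.dualSubmodule F = F ⊔ Submodule.span ℤ {a, (4 : ℚ)⁻¹ • hbar}) :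
    ∀ l : V,
      (l ∈ N ∧ B l l = 4 ∧ B l hbar = 4) ↔
      (l ∈ F ⊔ Submodule.span ℤ {a + (2 : ℚ)⁻¹ • hbar} ∧ B l l = 4 ∧ B l hbar = 4) :=
  stmt_18_general B hsymm N hbar F hFN hbarF hbar4 hindex a haN hahbar
end
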